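/- arXiv:2201.04603 — 4 statements merged into one kernel-verified Lean document; each statement's English description precedes it below -/
import Mathlib

section
/- Let A, B be finite alphabets with #A ≥ 2 and let f : A* → B* be a Parikh-collinear morphism. For a word e = e_1⋯e_n of length n over B, define g_e : A^n → ℕ by g_e(a_1⋯a_n) = ∏_{i=1}^n C(f(a_i), e_i). Then for all words w, w' ∈ A^n that are abelian equivalent (w ∼_1 w'), one has g_e(w) = g_e(w'). -/
/-- The number of occurrences of `w` as a (scattered) subword of `u`:
the binomial coefficient of the words `u` and `w`. -/
def wordBinom {A : Type*} [DecidableEq A] (u w : List A) : ℕ := u.sublists.count w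

/-- `k`-binomial equivalence of finite words: all binomial coefficients with respect to
words of length at most `k` agree. -/
def BinEquiv {A : Type*} [DecidableEq A] (k : ℕ) (u v : List A) : Prop :=
  ∀ x : List A, x.length ≤ k → wordBinom u x = wordBinom v x

/-- `k`-binomial equivalence as a setoid. -/
def binSetoid (A : Type*) [DecidableEq A] (k : ℕ) : Setoid (List A) where
  r := BinEquiv k
  iseqv := ⟨fun _ _ _ => rfl, fun h x hx => (h x hx).symm,
    fun h h' x hx => (h x hx).trans (h' x hx)⟩

/-- `u` occurs in the infinite word `x` at position `i`. -/
def OccursAt {A : Type*} (u : List A) (x : ℕ → A) (i : ℕ) : Prop :=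
  u = (List.range u.length).map (fun j => x (i + j))

/-- `u` is a factor of the infinite word `x`. -/
def FactorOf {A : Type*} (u : List A) (x : ℕ → A) : Prop := ∃ i, OccursAt u x i

/-- The set of length-`n` factors of `x`. -/
def Fac {A : Type*} (x : ℕ → A) (n : ℕ) : Set (List A) :=
  {u | u.length = n ∧ FactorOf u x}

/-- Factor complexity of an infinite word. -/
noncomputable def fc {A : Type*} (x : ℕ → A) (n : ℕ) : ℕ := (Fac x n).ncard

/-- `k`-binomial complexity of an infinite word: the number of `k`-binomial equivalence
classes of length-`n` factors. -/
noncomputable def bc {A : Type*} [DecidableEq A] (x : ℕ → A) (k n : ℕ) : ℕ :=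
  (Quotient.mk (binSetoid A k) '' Fac x n).ncard

/-- Application of a morphism (given by the images of letters) to a finite word. -/
def mAp {A B : Type*} (f : A → List B) (u : List A) : List B := (u.map f).flatten

/-- A morphism is Parikh-collinear if the Parikh vectors of images of letters are
pairwise rationally collinear. -/
def ParikhCollinear {A B : Type*} [DecidableEq B] (f : A → List B) : Prop :=
  ∀ a b : A, ∃ r : ℚ, ∀ c : B, ((f b).count c : ℚ) = r * ((f a).count c)

/-!
Fix a letter `a₀`. Parikh-collinearity gives rationals `r b` with `|f(b)|_c = r b · |f(a₀)|_c`
for all letters `b` and `c`, so `g_e(w) = (∏ᵢ r wᵢ) · ∏ᵢ |f(a₀)|_{eᵢ}`. The first factor depends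
only on the Parikh vector of `w`, the second not on `w` at all.
-/

theorem wordBinom_cons {A : Type*} [DecidableEq A] (u w : List A) (b : A) :
    wordBinom (b :: u) w = wordBinom u w + (u.sublists.map (List.cons b)).count w := by
  rw [wordBinom, (List.sublists_cons_perm_append b u).count_eq, List.count_append]; rfl

theorem wordBinom_nil {A : Type*} [DecidableEq A] (u : List A) : wordBinom u [] = 1 := by
  induction u with
  | nil => rfl
  | cons b u ih => rw [wordBinom_cons, ih, List.count_eq_zero.mpr (by simp)]

theorem wordBinom_singleton {A : Type*} [DecidableEq A] (u : List A) (a : A) :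
    wordBinom u [a] = u.count a := by
  induction u with
  | nil => rfl
  | cons b u ih =>
    rw [wordBinom_cons, ih, List.count_cons]
    by_cases hb : b = a
    · subst hb
      rw [List.count_map_of_injective _ _ List.cons_injective, ← wordBinom, wordBinom_nil]
      simp
    · have hnot : [a] ∉ u.sublists.map (List.cons b) := by simp [hb]
      rw [List.count_eq_zero.mpr hnot]
      simp [hb]

theorem perm_of_binEquiv_one {A : Type*} [DecidableEq A] {u v : List A} (h : BinEquiv 1 u v) :
    u.Perm v :=
  List.perm_iff_count.mpr fun a => by
    simpa only [wordBinom_singleton] using h [a] (by simp)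

theorem List.prod_map_zip_mul {α β M : Type*} [CommMonoid M] (r : α → M) (s : β → M)
    {l : List α} {l' : List β} (h : l.length = l'.length) :
    ((l.zip l').map fun p => r p.1 * s p.2).prod = (l.map r).prod * (l'.map s).prod := by
  have := List.prod_map_mul (l := l.zip l') (f := r ∘ Prod.fst) (g := s ∘ Prod.snd)
  rwa [← List.map_map, ← List.map_map, List.map_fst_zip h.le, List.map_snd_zip h.ge] at this

theorem List.Perm.prod_map_zip_mul {α β M : Type*} [CommMonoid M] (r : α → M) (s : β → M)
    {l₁ l₂ : List α} {l' : List β} (hp : l₁.Perm l₂) (h : l₁.length = l'.length) :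
    ((l₁.zip l').map fun p => r p.1 * s p.2).prod
      = ((l₂.zip l').map fun p => r p.1 * s p.2).prod := by
  rw [List.prod_map_zip_mul r s h, List.prod_map_zip_mul r s (hp.length_eq ▸ h),
    (hp.map r).prod_eq]

theorem parikhCollinear_g_constant_on_abelian_classes_general {A B : Type*}
    [Fintype A] [DecidableEq A] [DecidableEq B]
    (hA : 2 ≤ Fintype.card A) (f : A → List B) (hf : ParikhCollinear f)
    (e : List B) (w w' : List A)
    (hw : w.length = e.length)
    (h : BinEquiv 1 w w') :
    ((w.zip e).map (fun p => wordBinom (f p.1) [p.2])).prod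
      = ((w'.zip e).map (fun p => wordBinom (f p.1) [p.2])).prod := by
  obtain ⟨a₀⟩ : Nonempty A := Fintype.card_pos_iff.mp (by omega)
  choose r hr using hf a₀
  have hcast : ∀ v : List A, (((v.zip e).map fun p => wordBinom (f p.1) [p.2]).prod : ℚ)
      = ((v.zip e).map fun p => r p.1 * (f a₀).count p.2).prod := fun v => by
    rw [Nat.cast_list_prod, List.map_map]
    exact congrArg List.prod <| List.map_congr_left fun p _ => by
      rw [Function.comp_apply, wordBinom_singleton]
      exact hr p.1 p.2
  apply Nat.cast_injective (R := ℚ)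
  rw [hcast, hcast]
  exact (perm_of_binEquiv_one h).prod_map_zip_mul r (fun c => ((f a₀).count c : ℚ)) hw

theorem parikhCollinear_g_constant_on_abelian_classes {A B : Type*}
    [Fintype A] [DecidableEq A] [Fintype B] [DecidableEq B]
    (hA : 2 ≤ Fintype.card A) (f : A → List B) (hf : ParikhCollinear f)
    (e : List B) (w w' : List A)
    (hw : w.length = e.length) (hw' : w'.length = e.length)
    (h : BinEquiv 1 w w') :
    ((w.zip e).map (fun p => wordBinom (f p.1) [p.2])).prod
      = ((w'.zip e).map (fun p => wordBinom (f p.1) [p.2])).prod :=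
  parikhCollinear_g_constant_on_abelian_classes_general hA f hf e w w' hw h
end

section
/- Let k ≥ 1 and let x, y ∈ A* be two k-binomially equivalent words. For every integer n ≥ 0 and every word e ∈ A* of length k+1, one has (as integers) C(x^n, e) − C(y^n, e) = n·(C(x, e) − C(y, e)). In particular, for every n ≥ 1, x ∼_{k+1} y if and only if x^n ∼_{k+1} y^n. -/
/-!
Cauchy's formula expresses `wordBinom (u ++ v) e` as a sum over the factorizations `e = e₁ ++ e₂`
of `wordBinom u e₁ * wordBinom v e₂`. When `u ∼ₖ u'`, `v ∼ₖ v'` and `|e| = k + 1`, every term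
with `e₁` and `e₂` both nonempty is the same for `(u, v)` and `(u', v')`, so the difference
`wordBinom · e` is additive along such concatenations. Since `∼ₖ` is a congruence, `xⁿ ∼ₖ yⁿ`,
and induction on `n` gives the difference `n * (wordBinom x e - wordBinom y e)`.
-/

open Finset

section WordBinom

variable {A : Type*} [DecidableEq A]

theorem List.count_map_append_right (S : List (List A)) (x w : List A) :
    (S.map (· ++ x)).count w =
      ∑ i ∈ Finset.range (w.length + 1), if x = w.drop i then S.count (w.take i) else 0 := by
  by_cases hx : x <:+ w
  · obtain ⟨p, rfl⟩ := hx
    rw [count_map_of_injective _ _ (append_left_injective x),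
      sum_eq_single_of_mem p.length (by simp)]
    · simp
    · intro i hi hne
      have hlen : (p ++ x).length - i ≠ x.length := by
        simp only [Finset.mem_range, length_append] at hi ⊢
        omega
      rw [if_neg fun (h : x = _) => hlen (h ▸ length_drop ..).symm]
  · rw [Finset.sum_eq_zero fun i _ => if_neg fun (h : x = w.drop i) => hx (h ▸ drop_suffix i w),
      count_eq_zero]
    simp only [mem_map, not_exists, not_and]
    exact fun s _ hs => hx ⟨s, hs⟩

theorem List.count_flatMap_map_append (S T : List (List A)) (w : List A) :
    (T.flatMap fun x => S.map (· ++ x)).count w =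
      ∑ i ∈ Finset.range (w.length + 1), S.count (w.take i) * T.count (w.drop i) := by
  induction T with
  | nil => simp
  | cons x T ih =>
    rw [flatMap_cons, count_append, ih, count_map_append_right, ← sum_add_distrib]
    refine sum_congr rfl fun i _ => ?_
    by_cases h : x = w.drop i <;> simp [h, mul_add, add_comm]

theorem wordBinom_nil_left {w : List A} (hw : w ≠ []) : wordBinom [] w = 0 := by
  simp [wordBinom, hw.symm]

theorem wordBinom_append (u v w : List A) :
    wordBinom (u ++ v) w =
      ∑ i ∈ range (w.length + 1), wordBinom u (w.take i) * wordBinom v (w.drop i) := by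
  rw [wordBinom, List.sublists_append, List.bind_eq_flatMap, List.count_flatMap_map_append]
  rfl

theorem wordBinom_nil_right (u : List A) : wordBinom u [] = 1 := by
  induction u with
  | nil => rfl
  | cons a u ih =>
    rw [← List.singleton_append, wordBinom_append]
    simpa [wordBinom] using ih

end WordBinom

namespace BinEquiv

variable {A : Type*} [DecidableEq A] {k : ℕ}

theorem append {u u' v v' : List A} (hu : BinEquiv k u u') (hv : BinEquiv k v v') :
    BinEquiv k (u ++ v) (u' ++ v') := by
  intro w hw
  rw [wordBinom_append, wordBinom_append]
  refine sum_congr rfl fun i _ => ?_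
  rw [hu _ ((List.length_take_le' i w).trans hw),
    hv _ ((List.drop_sublist i w).length_le.trans hw)]

theorem flatten_replicate {x y : List A} (h : BinEquiv k x y) (n : ℕ) :
    BinEquiv k (List.replicate n x).flatten (List.replicate n y).flatten := by
  induction n with
  | zero => exact fun _ _ => rfl
  | succ n ih => simpa only [List.replicate_succ, List.flatten_cons] using h.append ih

theorem wordBinom_append_sub {u u' v v' : List A} (hu : BinEquiv k u u') (hv : BinEquiv k v v')
    {e : List A} (he : e.length = k + 1) :
    (wordBinom (u ++ v) e : ℤ) - wordBinom (u' ++ v') e =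
      (wordBinom u e - wordBinom u' e) + (wordBinom v e - wordBinom v' e) := by
  have hsplit : ∀ i ∈ range k,
      wordBinom u (e.take (i + 1)) * wordBinom v (e.drop (i + 1)) =
        wordBinom u' (e.take (i + 1)) * wordBinom v' (e.drop (i + 1)) := fun i hi => by
    have hi : i < k := mem_range.mp hi
    rw [hu _ (by rw [List.length_take]; omega),
      hv _ (by rw [List.length_drop]; omega)]
  have he_take : e.take (k + 1) = e := List.take_of_length_le he.le
  have he_drop : e.drop (k + 1) = [] := List.drop_eq_nil_of_le he.le
  rw [wordBinom_append, wordBinom_append, he, sum_range_succ, sum_range_succ', sum_range_succ,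
    sum_range_succ', sum_congr rfl hsplit]
  simp only [he_take, he_drop, List.take_zero, List.drop_zero, wordBinom_nil_right]
  push_cast
  ring

theorem wordBinom_flatten_replicate_sub {x y : List A} (h : BinEquiv k x y) {e : List A}
    (he : e.length = k + 1) (n : ℕ) :
    (wordBinom (List.replicate n x).flatten e : ℤ) - wordBinom (List.replicate n y).flatten e =
      n * (wordBinom x e - wordBinom y e) := by
  induction n with
  | zero =>
    have hne : e ≠ [] := List.ne_nil_of_length_eq_add_one he
    simp [wordBinom_nil_left hne]
  | succ n ih =>
    simp only [List.replicate_succ, List.flatten_cons]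
    rw [h.wordBinom_append_sub (h.flatten_replicate n) he, ih]
    push_cast
    ring

end BinEquiv

theorem binEquiv_succ_iff {A : Type*} [DecidableEq A] {k : ℕ} {u v : List A} :
    BinEquiv (k + 1) u v ↔
      BinEquiv k u v ∧ ∀ e : List A, e.length = k + 1 → wordBinom u e = wordBinom v e := by
  refine ⟨fun h => ⟨fun w hw => h w (by omega), fun e he => h e he.le⟩, fun ⟨h, he⟩ w hw => ?_⟩
  rcases Nat.lt_or_eq_of_le hw with hw | hw
  · exact h w (by omega)
  · exact he w hw

theorem binomial_coeff_powers_general {A : Type*} [DecidableEq A] (k : ℕ)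
    (x y : List A) (h : BinEquiv k x y) :
    (∀ (n : ℕ) (e : List A), e.length = k + 1 →
      (wordBinom (List.replicate n x).flatten e : ℤ)
          - (wordBinom (List.replicate n y).flatten e : ℤ)
        = n * ((wordBinom x e : ℤ) - (wordBinom y e : ℤ))) ∧
    (∀ n : ℕ, 1 ≤ n →
      (BinEquiv (k + 1) x y ↔
        BinEquiv (k + 1) (List.replicate n x).flatten (List.replicate n y).flatten)) := by
  refine ⟨fun n e he => h.wordBinom_flatten_replicate_sub he n, fun n hn_pos => ?_⟩
  have hn : (n : ℤ) ≠ 0 := by exact_mod_cast Nat.one_le_iff_ne_zero.mp hn_pos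
  simp only [binEquiv_succ_iff, h, h.flatten_replicate n, true_and]
  refine forall_congr' fun e => imp_congr_right fun he => ?_
  rw [← Int.natCast_inj, ← Int.natCast_inj, ← sub_eq_zero,
    ← sub_eq_zero (a := (wordBinom (List.replicate n x).flatten e : ℤ)),
    h.wordBinom_flatten_replicate_sub he n, mul_eq_zero, or_iff_right hn]

theorem binomial_coeff_powers {A : Type*} [DecidableEq A] (k : ℕ) (hk : 1 ≤ k)
    (x y : List A) (h : BinEquiv k x y) :
    (∀ (n : ℕ) (e : List A), e.length = k + 1 →
      (wordBinom (List.replicate n x).flatten e : ℤ)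
          - (wordBinom (List.replicate n y).flatten e : ℤ)
        = n * ((wordBinom x e : ℤ) - (wordBinom y e : ℤ))) ∧
    (∀ n : ℕ, 1 ≤ n →
      (BinEquiv (k + 1) x y ↔
        BinEquiv (k + 1) (List.replicate n x).flatten (List.replicate n y).flatten)) :=
  binomial_coeff_powers_general k x y h
end

section
/- Let y be an aperiodic infinite binary word and k ≥ 0 an integer. Then for all n ≤ 2^k, the set of length-n factors of φ^k(y) equals the set of length-n factors of the Thue–Morse word t: Fac_n(φ^k(y)) = Fac_n(t). -/
/-- The Thue–Morse morphism `φ : 0 ↦ 01, 1 ↦ 10`. -/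
def phi : Fin 2 → List (Fin 2) := fun a => if a = 0 then [0, 1] else [1, 0]

/-- The Thue–Morse morphism applied to a finite word. -/
def phiW : List (Fin 2) → List (Fin 2) := fun u => (u.map phi).flatten

/-- The `k`-th power `φ^k` of the Thue–Morse morphism, on finite words. -/
def phiPow (k : ℕ) : List (Fin 2) → List (Fin 2) := phiW^[k]

/-- `φ^k` applied to an infinite binary word (note `φ^k` is `2^k`-uniform). -/
def phiPowInf (k : ℕ) (y : ℕ → Fin 2) : ℕ → Fin 2 :=
  fun n => (phiPow k [y (n / 2 ^ k)]).getD (n % 2 ^ k) 0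

/-- The Thue–Morse word `t = 0110100110010110⋯`, `t n` being the parity of the
binary digit sum of `n`. -/
def thueMorse : ℕ → Fin 2 := fun n => Fin.ofNat 2 (Nat.digits 2 n).sum

/-- Ultimately periodic infinite words. -/
def UltPeriodic {A : Type*} (x : ℕ → A) : Prop :=
  ∃ p, 1 ≤ p ∧ ∃ N, ∀ n, N ≤ n → x (n + p) = x n

/-!
Since `t(2^k q + r) = t(q) + t(r)` for `r < 2^k`, the word `φ^k(y)` has the letter
`y(i / 2^k) + t(i % 2^k)` at position `i`; in particular `φ^k(t) = t`. A factor of length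
`n ≤ 2^k` of `φ^k(y)` lies inside two consecutive blocks `φ^k(y_m y_{m+1})`, so it is
determined by the pair `y_m y_{m+1}` and its offset in the first block. All four pairs occur
in `t`, giving `Fac_n(φ^k(y)) ⊆ Fac_n(t)`. Conversely an aperiodic `y` contains `01`, `10` and
some `bb`. If `b ≠ a`, a window over the pair `aa` reappears over `bb` shifted by `2^(k-1)`:
`φ^k(aa) = PQPQ` and `φ^k(bb) = QPQP` with `P = φ^(k-1)(a)`, `Q = φ^(k-1)(b)`. For `k = 0` the
factors are single letters, and `y` contains both.
-/

theorem thueMorse_add_two_pow_mul {k r : ℕ} (hr : r < 2 ^ k) (q : ℕ) :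
    thueMorse (r + 2 ^ k * q) = thueMorse r + thueMorse q := by
  rcases Nat.eq_zero_or_pos q with rfl | hq
  · simp [thueMorse]
  have hlen : (Nat.digits 2 r).length ≤ k := (Nat.digits_length_le_iff one_lt_two r).mpr hr
  rw [thueMorse, ← Nat.add_sub_cancel' hlen,
    ← Nat.digits_append_zeroes_append_digits one_lt_two hq]
  ext
  simp [thueMorse, Fin.val_add, Nat.add_mod]

theorem thueMorse_one : thueMorse 1 = 1 := by simp [thueMorse]

theorem thueMorse_add_two_pow {k r : ℕ} (hr : r < 2 ^ k) :
    thueMorse (r + 2 ^ k) = thueMorse r + 1 := by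
  simpa [thueMorse_one] using thueMorse_add_two_pow_mul hr 1

theorem thueMorse_add_two_pow_mod (k x : ℕ) :
    thueMorse ((x + 2 ^ k) % 2 ^ (k + 1)) = thueMorse (x % 2 ^ (k + 1)) + 1 := by
  have hP : 2 ^ (k + 1) = 2 ^ k + 2 ^ k := by ring
  have hx : x % 2 ^ (k + 1) < 2 ^ k + 2 ^ k := hP ▸ Nat.mod_lt _ (by positivity)
  rw [Nat.add_mod]
  rcases lt_or_ge (x % 2 ^ (k + 1)) (2 ^ k) with hlt | hge
  · rw [Nat.mod_eq_of_lt (a := 2 ^ k) (by rw [hP]; omega), Nat.mod_eq_of_lt (by omega),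
      thueMorse_add_two_pow hlt]
  · obtain ⟨c, hc⟩ := Nat.exists_eq_add_of_le' hge
    have hck : c < 2 ^ k := by omega
    rw [Nat.mod_eq_of_lt (a := 2 ^ k) (by rw [hP]; omega), hc,
      show c + 2 ^ k + 2 ^ k = c + 2 ^ (k + 1) by rw [hP]; ring, Nat.add_mod_right,
      Nat.mod_eq_of_lt (by omega), thueMorse_add_two_pow hck, add_assoc]
    simp

theorem exists_thueMorse_eq_and_succ_eq (a b : Fin 2) :
    ∃ m, thueMorse m = a ∧ thueMorse (m + 1) = b := by
  fin_cases a <;> fin_cases b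
  exacts [⟨5, by simp [thueMorse]⟩, ⟨0, by simp [thueMorse]⟩, ⟨2, by simp [thueMorse]⟩,
    ⟨1, by simp [thueMorse]⟩]

theorem phiW_append (u v : List (Fin 2)) : phiW (u ++ v) = phiW u ++ phiW v := by
  simp [phiW]

theorem phiW_singleton (a : Fin 2) : phiW [a] = [a] ++ [a + 1] := by
  fin_cases a <;> rfl

theorem phiPow_append (k : ℕ) (u v : List (Fin 2)) :
    phiPow k (u ++ v) = phiPow k u ++ phiPow k v := by
  induction k with
  | zero => rfl
  | succ k ih => simp only [phiPow, Function.iterate_succ_apply'] at ih ⊢; rw [ih, phiW_append]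

theorem phiPow_singleton (k : ℕ) (a : Fin 2) :
    phiPow k [a] = (List.range (2 ^ k)).map (a + thueMorse ·) := by
  induction k generalizing a with
  | zero => simp [phiPow, thueMorse]
  | succ k ih =>
    rw [phiPow, Function.iterate_succ_apply, ← phiPow, phiW_singleton, phiPow_append, ih, ih,
      pow_succ, mul_two, List.range_add, List.map_append, List.map_map]
    congr 1
    refine List.map_congr_left fun r hr => ?_
    simp only [Function.comp_apply, add_comm (2 ^ k) r,
      thueMorse_add_two_pow (List.mem_range.mp hr)]
    ac_rfl

theorem phiPowInf_apply (k : ℕ) (y : ℕ → Fin 2) (n : ℕ) :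
    phiPowInf k y n = y (n / 2 ^ k) + thueMorse (n % 2 ^ k) := by
  have hn : n % 2 ^ k < 2 ^ k := Nat.mod_lt _ (by positivity)
  simp [phiPowInf, phiPow_singleton, hn]

theorem phiPowInf_zero (y : ℕ → Fin 2) : phiPowInf 0 y = y := by
  ext n
  simp [phiPowInf_apply, Nat.mod_one, thueMorse]

theorem phiPowInf_thueMorse (k : ℕ) : phiPowInf k thueMorse = thueMorse := by
  ext n
  rw [phiPowInf_apply, add_comm, ← thueMorse_add_two_pow_mul (Nat.mod_lt _ (by positivity)),
    Nat.mod_add_div]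

theorem phiPowInf_mul_add (k : ℕ) (y : ℕ → Fin 2) (m r : ℕ) :
    phiPowInf k y (m * 2 ^ k + r) = y (m + r / 2 ^ k) + thueMorse (r % 2 ^ k) := by
  rw [phiPowInf_apply, mul_comm, Nat.mul_add_div (by positivity), Nat.mul_add_mod]

theorem OccursAt.of_forall_eq {A : Type*} {u : List A} {x x' : ℕ → A} {i i' : ℕ}
    (h : OccursAt u x i) (hx : ∀ j < u.length, x (i + j) = x' (i' + j)) :
    OccursAt u x' i' :=
  h.trans (List.map_congr_left fun j hj => hx j (List.mem_range.mp hj))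

theorem Nat.div_eq_zero_or_eq_one_of_lt_mul_two {P r : ℕ} (hr : r < P * 2) :
    r / P = 0 ∨ r / P = 1 :=
  Nat.le_one_iff_eq_zero_or_eq_one.mp (Nat.lt_succ_iff.mp (Nat.div_lt_of_lt_mul hr))

theorem OccursAt.phiPowInf_of_pair {k m i : ℕ} {y z : ℕ → Fin 2} {u : List (Fin 2)}
    (hu : u.length ≤ 2 ^ k) (h : OccursAt u (phiPowInf k y) i)
    (h₀ : y (i / 2 ^ k) = z m) (h₁ : y (i / 2 ^ k + 1) = z (m + 1)) :
    OccursAt u (phiPowInf k z) (m * 2 ^ k + i % 2 ^ k) := by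
  refine h.of_forall_eq fun j hj => ?_
  have hr : i % 2 ^ k < 2 ^ k := Nat.mod_lt _ (by positivity)
  have hi : i + j = i / 2 ^ k * 2 ^ k + (i % 2 ^ k + j) := by rw [← add_assoc, Nat.div_add_mod']
  rw [hi, add_assoc, phiPowInf_mul_add, phiPowInf_mul_add]
  rcases Nat.div_eq_zero_or_eq_one_of_lt_mul_two (P := 2 ^ k) (r := i % 2 ^ k + j) (by omega)
    with hd | hd <;> simp [hd, h₀, h₁]

theorem OccursAt.phiPowInf_succ_of_const_pair {k m i : ℕ} {a : Fin 2} {y z : ℕ → Fin 2}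
    {u : List (Fin 2)} (hu : u.length ≤ 2 ^ (k + 1)) (h : OccursAt u (phiPowInf (k + 1) y) i)
    (hy₀ : y (i / 2 ^ (k + 1)) = a) (hy₁ : y (i / 2 ^ (k + 1) + 1) = a)
    (hz₀ : z m = a + 1) (hz₁ : z (m + 1) = a + 1) :
    OccursAt u (phiPowInf (k + 1) z) (m * 2 ^ (k + 1) + (i + 2 ^ k) % 2 ^ (k + 1)) := by
  refine h.of_forall_eq fun j hj => ?_
  have hr : i % 2 ^ (k + 1) < 2 ^ (k + 1) := Nat.mod_lt _ (by positivity)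
  have hr' : (i + 2 ^ k) % 2 ^ (k + 1) < 2 ^ (k + 1) := Nat.mod_lt _ (by positivity)
  have hy : y (i / 2 ^ (k + 1) + (i % 2 ^ (k + 1) + j) / 2 ^ (k + 1)) = a := by
    rcases Nat.div_eq_zero_or_eq_one_of_lt_mul_two (P := 2 ^ (k + 1)) (r := i % 2 ^ (k + 1) + j)
      (by omega) with hd | hd <;> simpa [hd]
  have hz : z (m + ((i + 2 ^ k) % 2 ^ (k + 1) + j) / 2 ^ (k + 1)) = a + 1 := by
    rcases Nat.div_eq_zero_or_eq_one_of_lt_mul_two (P := 2 ^ (k + 1))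
      (r := (i + 2 ^ k) % 2 ^ (k + 1) + j) (by omega) with hd | hd <;> simpa [hd]
  have hi : i + j = i / 2 ^ (k + 1) * 2 ^ (k + 1) + (i % 2 ^ (k + 1) + j) := by
    rw [← add_assoc, Nat.div_add_mod']
  have hshift :
      ((i + 2 ^ k) % 2 ^ (k + 1) + j) % 2 ^ (k + 1) = (i + j + 2 ^ k) % 2 ^ (k + 1) := by
    rw [Nat.mod_add_mod, add_right_comm]
  rw [hi, add_assoc, phiPowInf_mul_add, phiPowInf_mul_add, hy, hz, hshift,
    thueMorse_add_two_pow_mod, Nat.mod_add_mod, add_add_add_comm,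
    show (1 + 1 : Fin 2) = 0 from rfl, add_zero]

theorem fin_two_eq_add_one_of_ne {x a : Fin 2} (h : x ≠ a) : x = a + 1 := by
  revert x a
  decide

theorem exists_eq_and_succ_eq_add_one_of_not_ultPeriodic {y : ℕ → Fin 2} (hy : ¬UltPeriodic y)
    (a : Fin 2) : ∃ m, y m = a ∧ y (m + 1) = a + 1 := by
  have hne : ∀ x b : Fin 2, x ≠ b + 1 ↔ x = b := by decide
  by_contra! h
  refine hy ⟨1, le_rfl, ?_⟩
  by_cases ha : ∃ N, y N = a
  · obtain ⟨N, hN⟩ := ha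
    have hconst : ∀ n ≥ N, y n = a :=
      fun n hn => Nat.le_induction hN (fun n _ hn => (hne _ _).mp (h n hn)) n hn
    exact ⟨N, fun n hn => (hconst _ (by omega)).trans (hconst n hn).symm⟩
  · push Not at ha
    exact ⟨0, fun n _ => (fin_two_eq_add_one_of_ne (ha _)).trans
      (fin_two_eq_add_one_of_ne (ha n)).symm⟩

theorem exists_eq_succ_of_not_ultPeriodic {y : ℕ → Fin 2} (hy : ¬UltPeriodic y) :
    ∃ m, y m = y (m + 1) := by
  by_contra! h
  have hcycle : ∀ a b c : Fin 2, a ≠ b → b ≠ c → c = a := by decide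
  exact hy ⟨2, by norm_num, 0, fun n _ => hcycle _ _ _ (h n) (h (n + 1))⟩

theorem FactorOf.of_length_le_one {A : Type*} {u : List A} {x x' : ℕ → A} (hu : u.length ≤ 1)
    (hx' : Function.Surjective x') (h : FactorOf u x) : FactorOf u x' := by
  obtain ⟨i, hi⟩ := h
  obtain ⟨i', hi'⟩ := hx' (x i)
  refine ⟨i', hi.of_forall_eq fun j hj => ?_⟩
  obtain rfl : j = 0 := by omega
  exact hi'.symm

theorem FactorOf.thueMorse_of_phiPowInf {k : ℕ} {y : ℕ → Fin 2} {u : List (Fin 2)}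
    (hu : u.length ≤ 2 ^ k) (h : FactorOf u (phiPowInf k y)) : FactorOf u thueMorse := by
  obtain ⟨i, hi⟩ := h
  obtain ⟨m, h₀, h₁⟩ := exists_thueMorse_eq_and_succ_eq (y (i / 2 ^ k)) (y (i / 2 ^ k + 1))
  rw [← phiPowInf_thueMorse k]
  exact ⟨_, hi.phiPowInf_of_pair hu h₀.symm h₁.symm⟩

theorem FactorOf.phiPowInf_succ_of_thueMorse {k : ℕ} {y : ℕ → Fin 2} {u : List (Fin 2)}
    (hy : ¬UltPeriodic y) (hu : u.length ≤ 2 ^ (k + 1)) (h : FactorOf u thueMorse) :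
    FactorOf u (phiPowInf (k + 1) y) := by
  rw [← phiPowInf_thueMorse (k + 1)] at h
  obtain ⟨i, hi⟩ := h
  set a := thueMorse (i / 2 ^ (k + 1))
  by_cases hconst : thueMorse (i / 2 ^ (k + 1) + 1) = a
  · obtain ⟨m, hm⟩ := exists_eq_succ_of_not_ultPeriodic hy
    by_cases hym : y m = a
    · exact ⟨_, hi.phiPowInf_of_pair hu hym.symm (hconst.trans (hym.symm.trans hm))⟩
    · have hym' : y m = a + 1 := fin_two_eq_add_one_of_ne hym
      exact ⟨_, hi.phiPowInf_succ_of_const_pair hu rfl hconst hym' (hm.symm.trans hym')⟩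
  · have hnext : thueMorse (i / 2 ^ (k + 1) + 1) = a + 1 := fin_two_eq_add_one_of_ne hconst
    obtain ⟨m, h₀, h₁⟩ := exists_eq_and_succ_eq_add_one_of_not_ultPeriodic hy a
    exact ⟨_, hi.phiPowInf_of_pair hu h₀.symm (hnext.trans h₁.symm)⟩

theorem phiPow_image_short_factors (k : ℕ) (y : ℕ → Fin 2) (hy : ¬ UltPeriodic y) :
    ∀ n : ℕ, n ≤ 2 ^ k → Fac (phiPowInf k y) n = Fac thueMorse n := by
  intro n hn
  ext u
  refine and_congr_right fun hu => ⟨FactorOf.thueMorse_of_phiPowInf (hu ▸ hn), ?_⟩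
  rcases k with _ | k
  · rw [phiPowInf_zero]
    exact .of_length_le_one (hu ▸ hn)
      fun a => (exists_eq_and_succ_eq_add_one_of_not_ultPeriodic hy a).imp fun _ h => h.1
  · exact .phiPowInf_succ_of_thueMorse hy (hu ▸ hn)
end

section
/- Let z be an aperiodic infinite binary word. Then for every n ≥ 1: (a) z has a factor of length n+1 that begins with 0 and ends with 1; (b) z has a factor of length n+1 that begins with 1 and ends with 0; (c) z has a factor of length n+1 that begins and ends with the same letter. Furthermore, if for a letter a ∈ {0,1} no factor of z of length n+1 both begins and ends with a, then z has a factor of length n+2 that begins and ends with the letter 1−a. -/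
private lemma prop_along {z : ℕ → Fin 2} {n : ℕ} {a : Fin 2}
    (h : ∀ i, z i = a → z (i + n) = a) :
    ∀ m, z m = a → ∀ k, z (m + k * n) = a := by
  intro m hm k
  induction k with
  | zero => simpa using hm
  | succ k ih =>
    have := h (m + k * n) ih
    have he : m + (k + 1) * n = m + k * n + n := by ring
    rwa [he]

private lemma key_lemma (z : ℕ → Fin 2) (n : ℕ) (hn : 1 ≤ n) (a : Fin 2)
    (h : ∀ i, z i = a → z (i + n) = a) : UltPeriodic z := by
  set B : Set ℕ := {m | z m ≠ a ∧ z (m + n) = a} with hB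
  have huniq : ∀ m ∈ B, ∀ m' ∈ B, m < m' → m % n = m' % n → False := by
    intro m hm m' hm' hlt hmod
    obtain ⟨k, hk⟩ := (Nat.modEq_iff_dvd' (le_of_lt hlt)).mp hmod
    cases k with
    | zero =>
      simp at hk; omega
    | succ k' =>
      have he : m' = (m + n) + k' * n := by
        have h2 : m' - m = n * k' + n := by rw [hk, Nat.mul_succ]
        have h3 := Nat.mul_comm k' n
        omega
      have : z m' = a := by
        rw [he]
        exact prop_along h (m + n) hm.2 k'
      exact hm'.1 this
  have hBfin : B.Finite := by
    rw [Set.finite_coe_iff.symm]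
    have hinj : Function.Injective
        (fun m : B => (⟨m.1 % n, Nat.mod_lt _ hn⟩ : Fin n)) := by
      rintro ⟨m, hm⟩ ⟨m', hm'⟩ hEq
      simp only [Fin.mk.injEq] at hEq
      ext
      rcases lt_trichotomy m m' with h1 | h1 | h1
      · exact absurd (huniq m hm m' hm' h1 hEq) (fun x => x)
      · exact h1
      · exact absurd (huniq m' hm' m hm h1 hEq.symm) (fun x => x)
    exact Finite.of_injective _ hinj
  obtain ⟨N, hN⟩ := hBfin.bddAbove
  refine ⟨n, hn, N + 1, ?_⟩
  intro m hm
  by_cases hma : z m = a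
  · rw [h m hma, hma]
  · have hmna : z (m + n) ≠ a := by
      intro hc
      have : m ∈ B := ⟨hma, hc⟩
      have := hN this
      omega
    have fact : ∀ (a u v : Fin 2), u ≠ a → v ≠ a → u = v := by decide
    exact fact a _ _ hmna hma

theorem aperiodic_boundary_letters (z : ℕ → Fin 2) (hz : ¬ UltPeriodic z)
    (n : ℕ) (hn : 1 ≤ n) :
    (∃ i, z i = 0 ∧ z (i + n) = 1) ∧
    (∃ i, z i = 1 ∧ z (i + n) = 0) ∧
    (∃ a : Fin 2, ∃ i, z i = a ∧ z (i + n) = a) ∧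
    (∀ a : Fin 2, (∀ i, ¬ (z i = a ∧ z (i + n) = a)) →
      ∃ i, z i = 1 - a ∧ z (i + n + 1) = 1 - a) := by
  have ha : ∃ i, z i = 0 ∧ z (i + n) = 1 := by
    by_contra hc
    push_neg at hc
    refine hz (key_lemma z n hn 0 ?_)
    intro i hi
    have := hc i hi
    have fact : ∀ v : Fin 2, v ≠ 1 → v = 0 := by decide
    exact fact _ this
  have hb : ∃ i, z i = 1 ∧ z (i + n) = 0 := by
    by_contra hc
    push_neg at hc
    refine hz (key_lemma z n hn 1 ?_)
    intro i hi
    have := hc i hi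
    have fact : ∀ v : Fin 2, v ≠ 0 → v = 1 := by decide
    exact fact _ this
  have hcc : ∃ a : Fin 2, ∃ i, z i = a ∧ z (i + n) = a := by
    by_contra hc
    push_neg at hc
    have hne : ∀ i, z (i + n) ≠ z i := fun i h => hc (z i) i rfl h
    refine hz ⟨n + n, by omega, 0, fun m _ => ?_⟩
    have h1 := hne m
    have h2 := hne (m + n)
    have he : m + n + n = m + (n + n) := by omega
    rw [he] at h2
    have fact : ∀ x y u : Fin 2, y ≠ x → u ≠ y → u = x := by decide
    exact fact _ _ _ h1 h2
  refine ⟨ha, hb, hcc, ?_⟩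
  intro a hA
  by_contra hc
  push_neg at hc
  have fact2 : ∀ (a v : Fin 2), v ≠ a → v = 1 - a := by decide
  have H2 : ∀ i, z i = 1 - a → z (i + n + 1) = a := by
    intro i hi
    have := hc i hi
    have fact3 : ∀ (a v : Fin 2), v ≠ 1 - a → v = a := by decide
    exact fact3 a _ this
  have H1 : ∀ j, z (j + n) = a → z j = 1 - a := by
    intro j hj
    have : z j ≠ a := fun h => hA j ⟨h, hj⟩
    exact fact2 a _ this
  obtain ⟨b, i, hib, hinb⟩ := hcc
  have hba : b = 1 - a := by
    have : b ≠ a := by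
      intro h; subst h
      exact hA i ⟨hib, hinb⟩
    exact fact2 a b this
  subst hba
  have hall : ∀ k, z (i + k) = 1 - a := by
    intro k
    induction k with
    | zero => simpa using hib
    | succ k ih =>
      apply H1
      have he : i + (k + 1) + n = i + k + n + 1 := by omega
      rw [he]
      exact H2 (i + k) ih
  have h1 : z (i + n + 1) = a := H2 i hib
  have h2 : z (i + (n + 1)) = 1 - a := hall (n + 1)
  have he : i + (n + 1) = i + n + 1 := by omega
  rw [he, h1] at h2
  exact (by decide : ∀ b : Fin 2, b ≠ 1 - b) a h2
end
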